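/- Let h₁₁, h₁c, h₁₂, h₂₁, h₂c, h₂₂ be nonnegative real numbers. Then the condition [for all (β₁,β₂) with β₁²+β₂²≤1: (h₁₁+β₁h₁c)² + (h₁₂+β₂h₁c)² + h₁c²(1−β₁²−β₂²) ≤ (h₂₁+β₁h₂c)² + (h₂₂+β₂h₂c)² + h₂c²(1−β₁²−β₂²)] holds if and only if (h₁₁² + h₁c² + h₁₂²) − (h₂₁² + h₂c² + h₂₂²) + 2·√((h₁c·h₁₁ − h₂c·h₂₁)² + (h₁c·h₁₂ − h₂c·h₂₂)²) ≤ 0. -/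

import Mathlib

/-- The "very strong interference at Rx 1" condition for the real-valued Gaussian
IFC-CR: the received-power comparison over all admissible correlations `(β₁, β₂)` is
equivalent to the closed-form condition with the square root term. -/
theorem very_strong_interference_condition (h₁₁ h₁c h₁₂ h₂₁ h₂c h₂₂ : ℝ)
    (H11 : 0 ≤ h₁₁) (H1c : 0 ≤ h₁c) (H12 : 0 ≤ h₁₂)
    (H21 : 0 ≤ h₂₁) (H2c : 0 ≤ h₂c) (H22 : 0 ≤ h₂₂) :
    (∀ β₁ β₂ : ℝ, β₁ ^ 2 + β₂ ^ 2 ≤ 1 →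
      (h₁₁ + β₁ * h₁c) ^ 2 + (h₁₂ + β₂ * h₁c) ^ 2 + h₁c ^ 2 * (1 - β₁ ^ 2 - β₂ ^ 2) ≤
      (h₂₁ + β₁ * h₂c) ^ 2 + (h₂₂ + β₂ * h₂c) ^ 2 + h₂c ^ 2 * (1 - β₁ ^ 2 - β₂ ^ 2)) ↔
    (h₁₁ ^ 2 + h₁c ^ 2 + h₁₂ ^ 2) - (h₂₁ ^ 2 + h₂c ^ 2 + h₂₂ ^ 2) +
      2 * Real.sqrt ((h₁c * h₁₁ - h₂c * h₂₁) ^ 2 + (h₁c * h₁₂ - h₂c * h₂₂) ^ 2) ≤ 0 := by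
  set a := h₁c * h₁₁ - h₂c * h₂₁ with ha
  set b := h₁c * h₁₂ - h₂c * h₂₂ with hb
  set A := (h₁₁ ^ 2 + h₁c ^ 2 + h₁₂ ^ 2) - (h₂₁ ^ 2 + h₂c ^ 2 + h₂₂ ^ 2) with hA
  set r := Real.sqrt (a ^ 2 + b ^ 2) with hr
  have hr0 : 0 ≤ r := Real.sqrt_nonneg _
  have hr2 : r ^ 2 = a ^ 2 + b ^ 2 := Real.sq_sqrt (by positivity)
  have key : ∀ β₁ β₂ : ℝ,
      ((h₁₁ + β₁ * h₁c) ^ 2 + (h₁₂ + β₂ * h₁c) ^ 2 + h₁c ^ 2 * (1 - β₁ ^ 2 - β₂ ^ 2) ≤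
        (h₂₁ + β₁ * h₂c) ^ 2 + (h₂₂ + β₂ * h₂c) ^ 2 + h₂c ^ 2 * (1 - β₁ ^ 2 - β₂ ^ 2)) ↔
      A + 2 * (β₁ * a + β₂ * b) ≤ 0 := by
    intro β₁ β₂
    have e : (h₂₁ + β₁ * h₂c) ^ 2 + (h₂₂ + β₂ * h₂c) ^ 2 + h₂c ^ 2 * (1 - β₁ ^ 2 - β₂ ^ 2)
        - ((h₁₁ + β₁ * h₁c) ^ 2 + (h₁₂ + β₂ * h₁c) ^ 2 + h₁c ^ 2 * (1 - β₁ ^ 2 - β₂ ^ 2))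
        = -(A + 2 * (β₁ * a + β₂ * b)) := by rw [hA, ha, hb]; ring
    constructor <;> intro h <;> linarith [e]
  constructor
  · intro h
    rcases eq_or_lt_of_le hr0 with hz | hp
    · have h0 := (key 0 0).mp (h 0 0 (by norm_num))
      rw [← hz] at hr2 ⊢
      norm_num at hr2
      linarith [h0]
    · have hβ : (a / r) ^ 2 + (b / r) ^ 2 ≤ 1 := by
        rw [div_pow, div_pow, ← add_div, ← hr2]
        exact div_self_le_one _
      have h1 := (key (a / r) (b / r)).mp (h _ _ hβ)
      have e2 : (a / r) * a + (b / r) * b = r := by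
        field_simp
        linarith [hr2]
      linarith [h1, e2]
  · intro h β₁ β₂ hβ
    rw [key]
    have cs : β₁ * a + β₂ * b ≤ r := by
      have h2 : (β₁ * a + β₂ * b) ^ 2 ≤ r ^ 2 := by
        nlinarith [sq_nonneg (β₁ * b - β₂ * a), sq_nonneg a, sq_nonneg b]
      have h3 := Real.sqrt_le_sqrt h2
      rw [Real.sqrt_sq_eq_abs, Real.sqrt_sq hr0] at h3
      exact le_trans (le_abs_self _) h3
    linarith
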